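/- Let X be the shift matrix and Z the clock matrix on ℂ^{ℤ/dℤ}, and let e_a (a ∈ ℤ/dℤ) be the standard basis. For integers x with 0 ≤ x ≤ (d−1)/2 and i ∈ ℤ/dℤ define v^x_i ∈ ℂ^{ℤ/dℤ} ⊗ ℂ^{ℤ/dℤ} by v^0_i = e_i ⊗ e_i and, for x ≠ 0, v^x_i = (1/√2)(e_{i−2^{−1}x} ⊗ e_{i+2^{−1}x} + e_{i+2^{−1}x} ⊗ e_{i−2^{−1}x}); for 1 ≤ x ≤ (d−1)/2 define w^x_i = (1/√2)(e_{i−2^{−1}x} ⊗ e_{i+2^{−1}x} − e_{i+2^{−1}x} ⊗ e_{i−2^{−1}x}). Then the vectors {v^x_i} ∪ {w^x_i} form an orthonormal basis of ℂ^{ℤ/dℤ} ⊗ ℂ^{ℤ/dℤ}, and the operators 𝐗 = X ⊗ X and 𝐙 = Z^{(d+1)/2} ⊗ Z^{(d+1)/2} act blockwise as the standard clock and shift: 𝐗 v^x_i = v^x_{i+1}, 𝐙 v^x_i = ω^i·v^x_i, 𝐗 w^x_i = w^x_{i+1}, and 𝐙 w^x_i = ω^i·w^x_i. In particular each span{v^x_i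 : i ∈ ℤ/dℤ} and span{w^x_i : i ∈ ℤ/dℤ} is a d-dimensional invariant subspace carrying the standard Weyl representation. -/

import Mathlib

open Matrix Complex Kronecker

/-- `ω = exp(2πi/d)`. -/
noncomputable def omg (d : ℕ) : ℂ := Complex.exp (2 * Real.pi * Complex.I / d)

/-- The shift matrix `X`, `(X)_{r,s} = δ_{r,s+1}`. -/
noncomputable def shiftX (d : ℕ) [NeZero d] : Matrix (ZMod d) (ZMod d) ℂ :=
  Matrix.of fun r s => if r = s + 1 then 1 else 0

/-- The clock matrix `Z`, `(Z)_{r,s} = ω^r δ_{r,s}`. -/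
noncomputable def clockZ (d : ℕ) [NeZero d] : Matrix (ZMod d) (ZMod d) ℂ :=
  Matrix.of fun r s => if r = s then omg d ^ r.val else 0

/-- The standard Hermitian inner product `⟨x, y⟩`, antilinear in the first slot. -/
noncomputable def cInner {n : Type*} [Fintype n] (x y : n → ℂ) : ℂ :=
  ∑ k, star (x k) * y k

/-- The symmetric basis vectors `v^x_i`: `v^0_i = e_i ⊗ e_i` and, for `x ≠ 0`,
`v^x_i = (1/√2)(e_{i-2⁻¹x} ⊗ e_{i+2⁻¹x} + e_{i+2⁻¹x} ⊗ e_{i-2⁻¹x})`. -/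
noncomputable def symV (d : ℕ) [NeZero d] (x : ℕ) (i : ZMod d) :
    ZMod d × ZMod d → ℂ :=
  if x = 0 then
    fun p => (if p.1 = i then 1 else 0) * (if p.2 = i then 1 else 0)
  else
    fun p => (1 / Real.sqrt 2 : ℂ) *
      ((if p.1 = i - (2 : ZMod d)⁻¹ * (x : ZMod d) then 1 else 0) *
        (if p.2 = i + (2 : ZMod d)⁻¹ * (x : ZMod d) then 1 else 0)
      + (if p.1 = i + (2 : ZMod d)⁻¹ * (x : ZMod d) then 1 else 0) *
        (if p.2 = i - (2 : ZMod d)⁻¹ * (x : ZMod d) then 1 else 0))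

/-- The antisymmetric basis vectors
`w^x_i = (1/√2)(e_{i-2⁻¹x} ⊗ e_{i+2⁻¹x} - e_{i+2⁻¹x} ⊗ e_{i-2⁻¹x})`. -/
noncomputable def antiV (d : ℕ) [NeZero d] (x : ℕ) (i : ZMod d) :
    ZMod d × ZMod d → ℂ :=
  fun p => (1 / Real.sqrt 2 : ℂ) *
    ((if p.1 = i - (2 : ZMod d)⁻¹ * (x : ZMod d) then 1 else 0) *
        (if p.2 = i + (2 : ZMod d)⁻¹ * (x : ZMod d) then 1 else 0)
      - (if p.1 = i + (2 : ZMod d)⁻¹ * (x : ZMod d) then 1 else 0) *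
        (if p.2 = i - (2 : ZMod d)⁻¹ * (x : ZMod d) then 1 else 0))

/-! Put `endpoints u i = (i - u/2, i + u/2)`. For `x ≠ 0` the vectors `v^x_i`, `w^x_i` are
`(e_p ± e_q)/√2` with `p = endpoints x i` and its transpose `q = endpoints (-x) i`, while
`v^0_i = e_p`. Since `2` is invertible mod `d`, `(u, i) ↦ endpoints u i` is injective, so distinct
labels `(x, i)` with `0 ≤ x ≤ (d - 1)/2` have disjoint supports `{p, q}`; on a common support the
two vectors are orthonormal, and there are `d²` of them. `𝐗` translates `p` and `q` by `(1, 1)`,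
i.e. `i ↦ i + 1`, and `𝐙` scales `e_(a,b)` by `ω^((a + b)/2)`, which is `ω^i` on `{p, q}`. -/

namespace DoubledWeyl

section InnerProduct

variable {m : Type*} [Fintype m]

lemma cInner_eq_star_dotProduct (f g : m → ℂ) : cInner f g = star f ⬝ᵥ g := rfl

lemma star_cInner (f g : m → ℂ) : star (cInner f g) = cInner g f := by
  simp [cInner, mul_comm]

lemma cInner_eq_zero_of_disjoint {f g : m → ℂ}
    (h : Disjoint (Function.support f) (Function.support g)) : cInner f g = 0 := by
  refine Finset.sum_eq_zero fun k _ => ?_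
  by_cases hf : f k = 0
  · simp [hf]
  · simp [Function.notMem_support.mp (Set.disjoint_left.mp h hf)]

lemma linearIndependent_of_cInner {ι : Type*} [Fintype ι] [DecidableEq ι] (f : ι → m → ℂ)
    (h : ∀ t t', cInner (f t) (f t') = if t = t' then 1 else 0) :
    LinearIndependent ℂ f := by
  rw [Fintype.linearIndependent_iff]
  intro c hc t
  have : cInner (f t) (∑ s, c s • f s) = c t := by
    simp only [cInner_eq_star_dotProduct, dotProduct_sum, dotProduct_smul]
    simp [← cInner_eq_star_dotProduct, h]
  rw [← this, hc]
  simp [cInner]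

variable [DecidableEq m]

lemma cInner_single_single (p : m) (a b : ℂ) :
    cInner (Pi.single p a) (Pi.single p b) = star a * b := by
  simp [cInner_eq_star_dotProduct]

lemma cInner_single_add_single {p q : m} (hpq : p ≠ q) (a b a' b' : ℂ) :
    cInner (Pi.single p a + Pi.single q b) (Pi.single p a' + Pi.single q b')
      = star a * a' + star b * b' := by
  simp [cInner_eq_star_dotProduct, hpq, hpq.symm]

end InnerProduct

lemma single_apply_prod {α β : Type*} [DecidableEq α] [DecidableEq β] (a p : α × β) (c : ℂ) :
    (Pi.single a c : α × β → ℂ) p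
      = c * ((if p.1 = a.1 then 1 else 0) * (if p.2 = a.2 then 1 else 0)) := by
  by_cases h1 : p.1 = a.1 <;> by_cases h2 : p.2 = a.2 <;>
    simp [Pi.single_apply, Prod.ext_iff, h1, h2]

section ZModOdd

variable {d : ℕ}

lemma natCast_eq_natCast_iff_of_lt {x x' : ℕ} (hx : x < d) (hx' : x' < d) :
    (x : ZMod d) = x' ↔ x = x' := by
  rw [ZMod.natCast_eq_natCast_iff', Nat.mod_eq_of_lt hx, Nat.mod_eq_of_lt hx']

lemma natCast_eq_neg_natCast_iff {x x' : ℕ} (h : x + x' < d) :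
    (x : ZMod d) = -x' ↔ x = 0 ∧ x' = 0 := by
  rw [eq_neg_iff_add_eq_zero, ← Nat.cast_add, ZMod.natCast_eq_zero_iff]
  exact ⟨fun hdvd => Nat.add_eq_zero_iff.mp (Nat.eq_zero_of_dvd_of_lt hdvd h),
    fun h0 => by simp [h0]⟩

lemma two_mul_half_succ (hodd : Odd d) : (2 : ZMod d) * ((d + 1) / 2 : ℕ) = 1 := by
  have : 2 * ((d + 1) / 2) = d + 1 := by obtain ⟨k, rfl⟩ := hodd; omega
  rw [← Nat.cast_ofNat, ← Nat.cast_mul, this]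
  simp

lemma inv_two_eq (hodd : Odd d) : (2 : ZMod d)⁻¹ = ((d + 1) / 2 : ℕ) :=
  ZMod.inv_eq_of_mul_eq_one _ _ _ (two_mul_half_succ hodd)

lemma two_mul_inv_two (hodd : Odd d) : (2 : ZMod d) * 2⁻¹ = 1 := by
  rw [inv_two_eq hodd, two_mul_half_succ hodd]

def endpoints (u i : ZMod d) : ZMod d × ZMod d := (i - 2⁻¹ * u, i + 2⁻¹ * u)

lemma endpoints_add_one (u i : ZMod d) : endpoints u i + 1 = endpoints u (i + 1) := by
  ext <;> simp [endpoints] <;> ring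

lemma endpoints_fst_add_snd (u i : ZMod d) :
    (endpoints u i).1 + (endpoints u i).2 = 2 * i := by
  simp [endpoints]; ring

lemma endpoints_inj (hodd : Odd d) {u u' i i' : ZMod d} :
    endpoints u i = endpoints u' i' ↔ u = u' ∧ i = i' := by
  refine ⟨fun h => ?_, fun ⟨hu, hi⟩ => hu ▸ hi ▸ rfl⟩
  obtain ⟨h1, h2⟩ := Prod.ext_iff.mp h
  simp only [endpoints] at h1 h2
  have H := two_mul_inv_two hodd
  have hi : i = i' := by linear_combination (2 : ZMod d)⁻¹ * (h1 + h2) + (i' - i) * H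
  subst hi
  exact ⟨by linear_combination h2 - h1 + (u' - u) * H, rfl⟩

lemma disjoint_endpoints (hodd : Odd d) {x x' : ℕ} (hx : 2 * x < d) (hx' : 2 * x' < d)
    {i i' : ZMod d} (h : ¬(x = x' ∧ i = i')) :
    Disjoint ({endpoints x i, endpoints (-x : ZMod d) i} : Set (ZMod d × ZMod d))
      {endpoints x' i', endpoints (-x' : ZMod d) i'} := by
  simp only [Set.disjoint_insert_left, Set.disjoint_singleton_left, Set.mem_insert_iff,
    Set.mem_singleton_iff, endpoints_inj hodd, neg_eq_iff_eq_neg, neg_neg,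
    natCast_eq_natCast_iff_of_lt (d := d) (by omega : x < d) (by omega : x' < d),
    natCast_eq_neg_natCast_iff (d := d) (by omega : x + x' < d)]
  grind

lemma endpoints_ne_endpoints_neg (hodd : Odd d) {x : ℕ} (hx0 : x ≠ 0) (hx : 2 * x < d)
    (i : ZMod d) : endpoints x i ≠ endpoints (-x : ZMod d) i := by
  simp [endpoints_inj hodd, natCast_eq_neg_natCast_iff (d := d) (by omega : x + x < d), hx0]

end ZModOdd

section Vectors

variable {d : ℕ} [NeZero d]

lemma symV_zero (i : ZMod d) : symV d 0 i = Pi.single (endpoints 0 i) 1 := by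
  ext p
  simp only [symV, ↓reduceIte, single_apply_prod, endpoints, mul_zero, sub_zero, add_zero, one_mul]

lemma symV_of_ne_zero {x : ℕ} (hx : x ≠ 0) (i : ZMod d) :
    symV d x i = Pi.single (endpoints x i) (1 / Real.sqrt 2 : ℂ)
      + Pi.single (endpoints (-x : ZMod d) i) (1 / Real.sqrt 2 : ℂ) := by
  ext p
  simp only [symV, if_neg hx, Pi.add_apply, single_apply_prod, endpoints, mul_neg,
    sub_neg_eq_add, ← sub_eq_add_neg]
  ring

lemma antiV_eq (x : ℕ) (i : ZMod d) :
    antiV d x i = Pi.single (endpoints x i) (1 / Real.sqrt 2 : ℂ)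
      + Pi.single (endpoints (-x : ZMod d) i) (-(1 / Real.sqrt 2 : ℂ)) := by
  ext p
  simp only [antiV, Pi.add_apply, single_apply_prod, endpoints, mul_neg,
    sub_neg_eq_add, ← sub_eq_add_neg]
  ring

lemma support_symV (x : ℕ) (i : ZMod d) :
    Function.support (symV d x i) ⊆ {endpoints x i, endpoints (-x : ZMod d) i} := by
  rcases eq_or_ne x 0 with rfl | hx
  · rw [symV_zero]
    exact Pi.support_single_subset.trans (by simp)
  · rw [symV_of_ne_zero hx]
    refine (Function.support_add _ _).trans (Set.union_subset ?_ ?_) <;>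
      exact Pi.support_single_subset.trans (by simp)

lemma support_antiV (x : ℕ) (i : ZMod d) :
    Function.support (antiV d x i) ⊆ {endpoints x i, endpoints (-x : ZMod d) i} := by
  rw [antiV_eq]
  refine (Function.support_add _ _).trans (Set.union_subset ?_ ?_) <;>
    exact Pi.support_single_subset.trans (by simp)

lemma shiftX_kron_shiftX_mulVec_single (p : ZMod d × ZMod d) (a : ℂ) :
    (shiftX d ⊗ₖ shiftX d) *ᵥ Pi.single p a = Pi.single (p + 1) a := by
  ext q
  simp only [mulVec, dotProduct_single, kroneckerMap_apply, shiftX, of_apply, single_apply_prod,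
    Prod.fst_add, Prod.snd_add, Prod.fst_one, Prod.snd_one]
  ring

lemma clockZ_eq_diagonal : clockZ d = diagonal fun r : ZMod d => omg d ^ r.val := by
  ext r s
  simp [clockZ, diagonal_apply]

lemma clockZ_pow_kron_mulVec_single (m : ℕ) (p : ZMod d × ZMod d) (a : ℂ) :
    ((clockZ d ^ m) ⊗ₖ (clockZ d ^ m)) *ᵥ Pi.single p a
      = omg d ^ (m * (p.1.val + p.2.val)) • Pi.single p a := by
  rw [clockZ_eq_diagonal, diagonal_pow, diagonal_kronecker_diagonal]
  ext q
  rcases eq_or_ne q p with rfl | hqp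
  · simp only [mulVec_diagonal, Pi.smul_apply, Pi.pow_apply, Pi.single_eq_same, smul_eq_mul]
    ring
  · simp [mulVec_diagonal, hqp]

lemma omg_pow_eq_pow {a b : ℕ} (h : (a : ZMod d) = b) : omg d ^ a = omg d ^ b :=
  pow_eq_pow_of_modEq ((ZMod.natCast_eq_natCast_iff _ _ _).mp h)
    (Complex.isPrimitiveRoot_exp d (NeZero.ne d)).pow_eq_one

lemma omg_pow_half_mul_endpoints (hodd : Odd d) (u i : ZMod d) :
    omg d ^ ((d + 1) / 2 * ((endpoints u i).1.val + (endpoints u i).2.val)) = omg d ^ i.val := by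
  apply omg_pow_eq_pow
  push_cast
  simp only [ZMod.natCast_val, ZMod.cast_id', id, ← inv_two_eq hodd, endpoints_fst_add_snd]
  linear_combination i * two_mul_inv_two hodd

lemma shiftX_kron_mulVec_symV (x : ℕ) (i : ZMod d) :
    (shiftX d ⊗ₖ shiftX d) *ᵥ symV d x i = symV d x (i + 1) := by
  rcases eq_or_ne x 0 with rfl | hx
  · rw [symV_zero, symV_zero, shiftX_kron_shiftX_mulVec_single, endpoints_add_one]
  · rw [symV_of_ne_zero hx, symV_of_ne_zero hx, mulVec_add, shiftX_kron_shiftX_mulVec_single,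
      shiftX_kron_shiftX_mulVec_single, endpoints_add_one, endpoints_add_one]

lemma shiftX_kron_mulVec_antiV (x : ℕ) (i : ZMod d) :
    (shiftX d ⊗ₖ shiftX d) *ᵥ antiV d x i = antiV d x (i + 1) := by
  rw [antiV_eq, antiV_eq, mulVec_add, shiftX_kron_shiftX_mulVec_single,
    shiftX_kron_shiftX_mulVec_single, endpoints_add_one, endpoints_add_one]

lemma clockZ_pow_kron_mulVec_symV (hodd : Odd d) (x : ℕ) (i : ZMod d) :
    ((clockZ d ^ ((d + 1) / 2)) ⊗ₖ (clockZ d ^ ((d + 1) / 2))) *ᵥ symV d x i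
      = omg d ^ i.val • symV d x i := by
  rcases eq_or_ne x 0 with rfl | hx
  · rw [symV_zero, clockZ_pow_kron_mulVec_single, omg_pow_half_mul_endpoints hodd]
  · rw [symV_of_ne_zero hx, mulVec_add, clockZ_pow_kron_mulVec_single,
      clockZ_pow_kron_mulVec_single, omg_pow_half_mul_endpoints hodd,
      omg_pow_half_mul_endpoints hodd, smul_add]

lemma clockZ_pow_kron_mulVec_antiV (hodd : Odd d) (x : ℕ) (i : ZMod d) :
    ((clockZ d ^ ((d + 1) / 2)) ⊗ₖ (clockZ d ^ ((d + 1) / 2))) *ᵥ antiV d x i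
      = omg d ^ i.val • antiV d x i := by
  rw [antiV_eq, mulVec_add, clockZ_pow_kron_mulVec_single, clockZ_pow_kron_mulVec_single,
    omg_pow_half_mul_endpoints hodd, omg_pow_half_mul_endpoints hodd, smul_add]

end Vectors

section Orthonormality

variable {d : ℕ} [NeZero d]

lemma star_one_div_sqrt_two_mul_self : star (1 / Real.sqrt 2 : ℂ) * (1 / Real.sqrt 2) = 1 / 2 := by
  rw [← Complex.ofReal_one, ← Complex.ofReal_div, Complex.star_def, Complex.conj_ofReal,
    ← Complex.ofReal_mul, div_mul_div_comm, Real.mul_self_sqrt zero_le_two]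
  norm_num

lemma cInner_symV_self (hodd : Odd d) {x : ℕ} (hx : 2 * x < d) (i : ZMod d) :
    cInner (symV d x i) (symV d x i) = 1 := by
  rcases eq_or_ne x 0 with rfl | hx0
  · rw [symV_zero, cInner_single_single, star_one, one_mul]
  · rw [symV_of_ne_zero hx0, cInner_single_add_single (endpoints_ne_endpoints_neg hodd hx0 hx i),
      star_one_div_sqrt_two_mul_self]
    norm_num

lemma cInner_antiV_self (hodd : Odd d) {x : ℕ} (hx0 : x ≠ 0) (hx : 2 * x < d) (i : ZMod d) :
    cInner (antiV d x i) (antiV d x i) = 1 := by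
  rw [antiV_eq, cInner_single_add_single (endpoints_ne_endpoints_neg hodd hx0 hx i), star_neg,
    neg_mul_neg, star_one_div_sqrt_two_mul_self]
  norm_num

lemma cInner_symV_antiV_self (hodd : Odd d) {x : ℕ} (hx0 : x ≠ 0) (hx : 2 * x < d)
    (i : ZMod d) : cInner (symV d x i) (antiV d x i) = 0 := by
  rw [symV_of_ne_zero hx0, antiV_eq,
    cInner_single_add_single (endpoints_ne_endpoints_neg hodd hx0 hx i), mul_neg,
    star_one_div_sqrt_two_mul_self, add_neg_cancel]

lemma cInner_symV_symV (hodd : Odd d) {x x' : ℕ} (hx : 2 * x < d) (hx' : 2 * x' < d)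
    (i i' : ZMod d) : cInner (symV d x i) (symV d x' i') = if x = x' ∧ i = i' then 1 else 0 := by
  split_ifs with h
  · obtain ⟨rfl, rfl⟩ := h
    exact cInner_symV_self hodd hx i
  · exact cInner_eq_zero_of_disjoint
      ((disjoint_endpoints hodd hx hx' h).mono (support_symV x i) (support_symV x' i'))

lemma cInner_antiV_antiV (hodd : Odd d) {x x' : ℕ} (hx0 : x ≠ 0) (hx : 2 * x < d)
    (hx' : 2 * x' < d) (i i' : ZMod d) :
    cInner (antiV d x i) (antiV d x' i') = if x = x' ∧ i = i' then 1 else 0 := by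
  split_ifs with h
  · obtain ⟨rfl, rfl⟩ := h
    exact cInner_antiV_self hodd hx0 hx i
  · exact cInner_eq_zero_of_disjoint
      ((disjoint_endpoints hodd hx hx' h).mono (support_antiV x i) (support_antiV x' i'))

lemma cInner_symV_antiV (hodd : Odd d) {x x' : ℕ} (hx0' : x' ≠ 0) (hx : 2 * x < d)
    (hx' : 2 * x' < d) (i i' : ZMod d) : cInner (symV d x i) (antiV d x' i') = 0 := by
  by_cases h : x = x' ∧ i = i'
  · obtain ⟨rfl, rfl⟩ := h
    exact cInner_symV_antiV_self hodd hx0' hx i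
  · exact cInner_eq_zero_of_disjoint
      ((disjoint_endpoints hodd hx hx' h).mono (support_symV x i) (support_antiV x' i'))

noncomputable def symAntiVec (d : ℕ) [NeZero d] :
    (Fin ((d - 1) / 2 + 1) × ZMod d) ⊕ (Fin ((d - 1) / 2) × ZMod d) → ZMod d × ZMod d → ℂ :=
  Sum.elim (fun q => symV d q.1.val q.2) (fun q => antiV d (q.1.val + 1) q.2)

lemma cInner_symAntiVec (hodd : Odd d)
    (t t' : (Fin ((d - 1) / 2 + 1) × ZMod d) ⊕ (Fin ((d - 1) / 2) × ZMod d)) :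
    cInner (symAntiVec d t) (symAntiVec d t') = if t = t' then 1 else 0 := by
  have hd : d % 2 = 1 := Nat.odd_iff.mp hodd
  rcases t with ⟨⟨x, hx⟩, i⟩ | ⟨⟨x, hx⟩, i⟩ <;> rcases t' with ⟨⟨x', hx'⟩, i'⟩ | ⟨⟨x', hx'⟩, i'⟩
  · simp [symAntiVec, cInner_symV_symV hodd (by omega : 2 * x < d) (by omega : 2 * x' < d)]
  · simp [symAntiVec, cInner_symV_antiV hodd x'.succ_ne_zero (by omega : 2 * x < d)
      (by omega : 2 * (x' + 1) < d)]
  · rw [symAntiVec, Sum.elim_inr, Sum.elim_inl, ← star_cInner, cInner_symV_antiV hodd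
      x.succ_ne_zero (by omega : 2 * x' < d) (by omega : 2 * (x + 1) < d)]
    simp
  · simp [symAntiVec, cInner_antiV_antiV hodd x.succ_ne_zero (by omega : 2 * (x + 1) < d)
      (by omega : 2 * (x' + 1) < d)]

lemma span_symAntiVec (hodd : Odd d) : Submodule.span ℂ (Set.range (symAntiVec d)) = ⊤ := by
  have hcard : (d - 1) / 2 + 1 + (d - 1) / 2 = d := by have := Nat.odd_iff.mp hodd; omega
  apply (linearIndependent_of_cInner _ (cInner_symAntiVec hodd)).span_eq_top_of_card_eq_finrank
  simp only [Fintype.card_sum, Fintype.card_prod, Fintype.card_fin, ZMod.card,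
    Module.finrank_fintype_fun_eq_card, ← add_mul, hcard]

lemma finrank_span_symV (hodd : Odd d) {x : ℕ} (hx : 2 * x < d) :
    Module.finrank ℂ (Submodule.span ℂ (Set.range fun i : ZMod d => symV d x i)) = d := by
  rw [finrank_span_eq_card (linearIndependent_of_cInner _ fun i i' => by
    simp [cInner_symV_symV hodd hx hx]), ZMod.card]

lemma finrank_span_antiV (hodd : Odd d) {x : ℕ} (hx0 : x ≠ 0) (hx : 2 * x < d) :
    Module.finrank ℂ (Submodule.span ℂ (Set.range fun i : ZMod d => antiV d x i)) = d := by
  rw [finrank_span_eq_card (linearIndependent_of_cInner _ fun i i' => by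
    simp [cInner_antiV_antiV hodd hx0 hx hx]), ZMod.card]

end Orthonormality

end DoubledWeyl

open DoubledWeyl in
theorem doubled_weyl_rep_decomposition_general
    (d : ℕ) [NeZero d] (hodd : Odd d) :
    -- orthonormal basis, indexed by the disjoint union of the two label sets
    (∀ t t' : (Fin ((d - 1) / 2 + 1) × ZMod d) ⊕ (Fin ((d - 1) / 2) × ZMod d),
      cInner
        (Sum.elim (fun q => symV d q.1.val q.2) (fun q => antiV d (q.1.val + 1) q.2) t)
        (Sum.elim (fun q => symV d q.1.val q.2) (fun q => antiV d (q.1.val + 1) q.2) t')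
      = if t = t' then 1 else 0) ∧
    (Submodule.span ℂ (Set.range
        (Sum.elim (fun q : Fin ((d - 1) / 2 + 1) × ZMod d => symV d q.1.val q.2)
          (fun q : Fin ((d - 1) / 2) × ZMod d => antiV d (q.1.val + 1) q.2)))
      = (⊤ : Submodule ℂ (ZMod d × ZMod d → ℂ))) ∧
    -- blockwise action of 𝐗 and 𝐙
    (∀ x : ℕ, x ≤ (d - 1) / 2 → ∀ i : ZMod d,
      (shiftX d ⊗ₖ shiftX d).mulVec (symV d x i) = symV d x (i + 1) ∧
      ((clockZ d ^ ((d + 1) / 2)) ⊗ₖ (clockZ d ^ ((d + 1) / 2))).mulVec (symV d x i)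
        = omg d ^ i.val • symV d x i) ∧
    (∀ x : ℕ, 1 ≤ x → x ≤ (d - 1) / 2 → ∀ i : ZMod d,
      (shiftX d ⊗ₖ shiftX d).mulVec (antiV d x i) = antiV d x (i + 1) ∧
      ((clockZ d ^ ((d + 1) / 2)) ⊗ₖ (clockZ d ^ ((d + 1) / 2))).mulVec (antiV d x i)
        = omg d ^ i.val • antiV d x i) ∧
    -- each block is a d-dimensional subspace
    (∀ x : ℕ, x ≤ (d - 1) / 2 →
      Module.finrank ℂ (Submodule.span ℂ (Set.range fun i : ZMod d => symV d x i)) = d) ∧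
    (∀ x : ℕ, 1 ≤ x → x ≤ (d - 1) / 2 →
      Module.finrank ℂ (Submodule.span ℂ (Set.range fun i : ZMod d => antiV d x i)) = d) := by
  have hd : d % 2 = 1 := Nat.odd_iff.mp hodd
  exact ⟨cInner_symAntiVec hodd, span_symAntiVec hodd,
    fun x _ i => ⟨shiftX_kron_mulVec_symV x i, clockZ_pow_kron_mulVec_symV hodd x i⟩,
    fun x _ _ i => ⟨shiftX_kron_mulVec_antiV x i, clockZ_pow_kron_mulVec_antiV hodd x i⟩,
    fun x hx => finrank_span_symV hodd (by omega),
    fun x hx0 hx => finrank_span_antiV hodd (by omega) (by omega)⟩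

/-- The vectors `{v^x_i} ∪ {w^x_i}` form an orthonormal basis of
`ℂ^{ℤ/dℤ} ⊗ ℂ^{ℤ/dℤ}`, on which `𝐗 = X ⊗ X` and `𝐙 = Z^{(d+1)/2} ⊗ Z^{(d+1)/2}`
act blockwise as the standard shift and clock, so that each
`span{v^x_i : i}` and `span{w^x_i : i}` is a `d`-dimensional invariant subspace
carrying the standard Weyl representation. -/
theorem doubled_weyl_rep_decomposition
    (d : ℕ) [NeZero d] (hodd : Odd d) (hd : 3 ≤ d) :
    -- orthonormal basis, indexed by the disjoint union of the two label sets
    (∀ t t' : (Fin ((d - 1) / 2 + 1) × ZMod d) ⊕ (Fin ((d - 1) / 2) × ZMod d),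
      cInner
        (Sum.elim (fun q => symV d q.1.val q.2) (fun q => antiV d (q.1.val + 1) q.2) t)
        (Sum.elim (fun q => symV d q.1.val q.2) (fun q => antiV d (q.1.val + 1) q.2) t')
      = if t = t' then 1 else 0) ∧
    (Submodule.span ℂ (Set.range
        (Sum.elim (fun q : Fin ((d - 1) / 2 + 1) × ZMod d => symV d q.1.val q.2)
          (fun q : Fin ((d - 1) / 2) × ZMod d => antiV d (q.1.val + 1) q.2)))
      = (⊤ : Submodule ℂ (ZMod d × ZMod d → ℂ))) ∧
    -- blockwise action of 𝐗 and 𝐙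
    (∀ x : ℕ, x ≤ (d - 1) / 2 → ∀ i : ZMod d,
      (shiftX d ⊗ₖ shiftX d).mulVec (symV d x i) = symV d x (i + 1) ∧
      ((clockZ d ^ ((d + 1) / 2)) ⊗ₖ (clockZ d ^ ((d + 1) / 2))).mulVec (symV d x i)
        = omg d ^ i.val • symV d x i) ∧
    (∀ x : ℕ, 1 ≤ x → x ≤ (d - 1) / 2 → ∀ i : ZMod d,
      (shiftX d ⊗ₖ shiftX d).mulVec (antiV d x i) = antiV d x (i + 1) ∧
      ((clockZ d ^ ((d + 1) / 2)) ⊗ₖ (clockZ d ^ ((d + 1) / 2))).mulVec (antiV d x i)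
        = omg d ^ i.val • antiV d x i) ∧
    -- each block is a d-dimensional subspace
    (∀ x : ℕ, x ≤ (d - 1) / 2 →
      Module.finrank ℂ (Submodule.span ℂ (Set.range fun i : ZMod d => symV d x i)) = d) ∧
    (∀ x : ℕ, 1 ≤ x → x ≤ (d - 1) / 2 →
      Module.finrank ℂ (Submodule.span ℂ (Set.range fun i : ZMod d => antiV d x i)) = d) :=
  doubled_weyl_rep_decomposition_general d hodd
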